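/- Define m(x,y) = min{xᵢ/yᵢ : yᵢ > 0} for x,y ∈ 𝕏, and d(x,y) = φ(m(x,y)·m(y,x)) where φ(s) = (1−s)/(1+s). Then d is a distance on 𝕏 with sup{d(x,y) : x,y ∈ 𝕏} = 1, and moreover |x − y| ≤ 2 d(x,y) for all x, y ∈ 𝕏 (where |·| is the ℓ¹ norm). -/
import Mathlib


open scoped BigOperators

/-- Membership in the simplex `𝕏 = {x : xᵢ ≥ 0, ∑ xᵢ = 1}`. -/
def memX {d : ℕ} (x : Fin d → ℝ) : Prop := (∀ i, 0 ≤ x i) ∧ ∑ i, x i = 1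

/-- `m(x,y) = min {xᵢ/yᵢ : yᵢ > 0}`. -/
noncomputable def mxy {d : ℕ} (x y : Fin d → ℝ) : ℝ :=
  sInf {r : ℝ | ∃ i, 0 < y i ∧ r = x i / y i}

/-- Hennion's projective distance `d(x,y) = φ(m(x,y)·m(y,x))` with `φ(s) = (1-s)/(1+s)`. -/
noncomputable def Dd {d : ℕ} (x y : Fin d → ℝ) : ℝ :=
  (1 - mxy x y * mxy y x) / (1 + mxy x y * mxy y x)

lemma exists_pos {d : ℕ} {y : Fin d → ℝ} (hy : memX y) : ∃ i, 0 < y i := by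
  by_contra h
  push_neg at h
  have : ∑ i, y i = 0 := Finset.sum_eq_zero fun i _ => le_antisymm (h i) (hy.1 i)
  rw [hy.2] at this; norm_num at this

lemma setne {d : ℕ} (x : Fin d → ℝ) {y : Fin d → ℝ} (hy : memX y) :
    {r : ℝ | ∃ i, 0 < y i ∧ r = x i / y i}.Nonempty := by
  obtain ⟨i, hi⟩ := exists_pos hy
  exact ⟨x i / y i, i, hi, rfl⟩

lemma setbdd {d : ℕ} {x y : Fin d → ℝ} (hx : memX x) :
    BddBelow {r : ℝ | ∃ i, 0 < y i ∧ r = x i / y i} := by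
  refine ⟨0, fun r ⟨i, hi, hr⟩ => ?_⟩
  rw [hr]; exact div_nonneg (hx.1 i) hi.le

lemma mxy_nonneg {d : ℕ} {x y : Fin d → ℝ} (hx : memX x) (hy : memX y) : 0 ≤ mxy x y :=
  le_csInf (setne x hy) (fun r ⟨i, hi, hr⟩ => hr ▸ div_nonneg (hx.1 i) hi.le)

lemma mxy_mul_le {d : ℕ} {x y : Fin d → ℝ} (hx : memX x) (hy : memX y) (i : Fin d) :
    mxy x y * y i ≤ x i := by
  rcases (hy.1 i).eq_or_lt with h | h
  · rw [← h, mul_zero]; exact hx.1 i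
  · have h1 : mxy x y ≤ x i / y i := csInf_le (setbdd hx) ⟨i, h, rfl⟩
    exact (le_div_iff₀ h).mp h1

lemma mxy_le_one {d : ℕ} {x y : Fin d → ℝ} (hx : memX x) (hy : memX y) : mxy x y ≤ 1 := by
  have h : ∑ i, mxy x y * y i ≤ ∑ i, x i := Finset.sum_le_sum fun i _ => mxy_mul_le hx hy i
  rwa [← Finset.mul_sum, hy.2, hx.2, mul_one] at h

lemma mxy_self {d : ℕ} {x : Fin d → ℝ} (hx : memX x) : mxy x x = 1 := by
  refine le_antisymm (mxy_le_one hx hx) (le_csInf (setne x hx) ?_)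
  rintro r ⟨i, hi, hr⟩
  rw [hr, div_self hi.ne']

lemma mxy_mul_mxy_le {d : ℕ} {x y z : Fin d → ℝ} (hx : memX x) (hy : memX y) (hz : memX z) :
    mxy x y * mxy y z ≤ mxy x z := by
  refine le_csInf (setne x hz) ?_
  rintro r ⟨i, hi, hr⟩
  rw [hr, le_div_iff₀ hi, mul_assoc]
  calc mxy x y * (mxy y z * z i) ≤ mxy x y * y i :=
        mul_le_mul_of_nonneg_left (mxy_mul_le hy hz i) (mxy_nonneg hx hy)
    _ ≤ x i := mxy_mul_le hx hy i

lemma keylem (α β A P : ℝ) (hα0 : 0 ≤ α) (hα1 : α ≤ 1) (hβ0 : 0 ≤ β) (hβ1 : β ≤ 1)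
    (hA0 : 0 ≤ A) (hA1 : A ≤ 1) (hP0 : 0 ≤ P)
    (h1 : P ≤ (1 - β) * A) (h2 : P ≤ (1 - α) * (1 - β * A)) :
    P * (1 + α * β) ≤ 1 - α * β := by
  have u : 0 ≤ (1 - β) * A - P := by linarith
  have v : 0 ≤ (1 - α) * (1 - β * A) - P := by linarith
  have h3 : (1 - α * β) * P ≤ (1 - α) * (1 - β) := by
    nlinarith [mul_nonneg (mul_nonneg hβ0 (by linarith : (0:ℝ) ≤ 1 - α)) u,
      mul_nonneg (by linarith : (0:ℝ) ≤ 1 - β) v]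
  rcases eq_or_lt_of_le (show α * β ≤ 1 by nlinarith) with heq | hlt
  · have hα : α = 1 := by nlinarith
    have : P ≤ 0 := by nlinarith
    nlinarith
  · have hstep : (1 - α) * (1 - β) * (1 + α * β) ≤ (1 - α * β) ^ 2 := by
      nlinarith [mul_nonneg hα0 (sq_nonneg (1 - β)), mul_nonneg hβ0 (sq_nonneg (1 - α))]
    have h4 : (1 - α * β) * P * (1 + α * β) ≤ (1 - α) * (1 - β) * (1 + α * β) :=
      mul_le_mul_of_nonneg_right h3 (by nlinarith)
    have h5 : P * (1 + α * β) * (1 - α * β) ≤ (1 - α * β) * (1 - α * β) := by nlinarith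
    exact le_of_mul_le_mul_right h5 (by linarith)

lemma trilem (a b c : ℝ) (ha0 : 0 ≤ a) (ha1 : a ≤ 1) (hb0 : 0 ≤ b) (hb1 : b ≤ 1)
    (hc0 : 0 ≤ c) (hab : a * b ≤ c) :
    (1 - c) / (1 + c) ≤ (1 - a) / (1 + a) + (1 - b) / (1 + b) := by
  have hab0 : 0 ≤ a * b := mul_nonneg ha0 hb0
  have step1 : (1 - c) / (1 + c) ≤ (1 - a * b) / (1 + a * b) := by
    rw [div_le_div_iff₀ (by linarith) (by linarith)]
    nlinarith
  refine step1.trans ?_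
  rw [div_add_div _ _ (by positivity) (by positivity),
    div_le_div_iff₀ (by linarith) (by positivity)]
  nlinarith [mul_nonneg (mul_nonneg (by linarith : (0:ℝ) ≤ 1 - a) (by linarith : (0:ℝ) ≤ 1 - b))
    (by nlinarith : (0:ℝ) ≤ 1 - a * b)]

theorem stmt4 {d : ℕ} (hd : 2 ≤ d) :
    (∀ x y : Fin d → ℝ, memX x → memX y → Dd x y = Dd y x) ∧
    (∀ x y : Fin d → ℝ, memX x → memX y → (Dd x y = 0 ↔ x = y)) ∧
    (∀ x y z : Fin d → ℝ, memX x → memX y → memX z → Dd x z ≤ Dd x y + Dd y z) ∧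
    IsLUB {r : ℝ | ∃ x y : Fin d → ℝ, memX x ∧ memX y ∧ r = Dd x y} 1 ∧
    (∀ x y : Fin d → ℝ, memX x → memX y → ∑ i, |x i - y i| ≤ 2 * Dd x y) := by
  refine ⟨?_, ?_, ?_, ?_, ?_⟩
  · -- symmetry
    intro x y _ _
    unfold Dd
    rw [mul_comm]
  · -- Dd = 0 ↔ x = y
    intro x y hx hy
    have ha0 := mxy_nonneg hx hy
    have ha1 := mxy_le_one hx hy
    have hb0 := mxy_nonneg hy hx
    have hb1 := mxy_le_one hy hx
    have hs0 : 0 ≤ mxy x y * mxy y x := mul_nonneg ha0 hb0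
    constructor
    · intro h
      unfold Dd at h
      rw [div_eq_zero_iff] at h
      have hs1 : mxy x y * mxy y x = 1 := by
        rcases h with h | h
        · linarith
        · linarith
      have hα : mxy x y = 1 := by nlinarith
      have hβ : mxy y x = 1 := by nlinarith
      funext i
      have h1 := mxy_mul_le hx hy i
      have h2 := mxy_mul_le hy hx i
      rw [hα, one_mul] at h1
      rw [hβ, one_mul] at h2
      linarith
    · intro h
      subst h
      unfold Dd
      rw [mxy_self hx]
      norm_num
  · -- triangle
    intro x y z hx hy hz
    unfold Dd
    refine trilem _ _ _ (mul_nonneg (mxy_nonneg hx hy) (mxy_nonneg hy hx))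
      (mul_le_one₀ (mxy_le_one hx hy) (mxy_nonneg hy hx) (mxy_le_one hy hx))
      (mul_nonneg (mxy_nonneg hy hz) (mxy_nonneg hz hy))
      (mul_le_one₀ (mxy_le_one hy hz) (mxy_nonneg hz hy) (mxy_le_one hz hy))
      (mul_nonneg (mxy_nonneg hx hz) (mxy_nonneg hz hx)) ?_
    calc mxy x y * mxy y x * (mxy y z * mxy z y)
        = (mxy x y * mxy y z) * (mxy z y * mxy y x) := by ring
      _ ≤ mxy x z * mxy z x := by
          apply mul_le_mul (mxy_mul_mxy_le hx hy hz) (mxy_mul_mxy_le hz hy hx)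
            (mul_nonneg (mxy_nonneg hz hy) (mxy_nonneg hy hx)) (mxy_nonneg hx hz)
  · -- IsLUB
    constructor
    · rintro r ⟨x, y, hx, hy, rfl⟩
      have hs0 : 0 ≤ mxy x y * mxy y x := mul_nonneg (mxy_nonneg hx hy) (mxy_nonneg hy hx)
      unfold Dd
      rw [div_le_one (by linarith)]
      linarith
    · intro b hb
      -- exhibit Dd e0 e1 = 1
      set i0 : Fin d := ⟨0, by omega⟩
      set i1 : Fin d := ⟨1, by omega⟩
      have hne : i0 ≠ i1 := by simp [i0, i1, Fin.ext_iff]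
      set e0 : Fin d → ℝ := fun i => if i = i0 then 1 else 0 with he0
      set e1 : Fin d → ℝ := fun i => if i = i1 then 1 else 0 with he1
      have hm0 : memX e0 := by
        constructor
        · intro i; simp only [he0]; split <;> norm_num
        · simp [he0]
      have hm1 : memX e1 := by
        constructor
        · intro i; simp only [he1]; split <;> norm_num
        · simp [he1]
      have hset : {r : ℝ | ∃ i, 0 < e1 i ∧ r = e0 i / e1 i} = {0} := by
        ext r
        simp only [Set.mem_setOf_eq, Set.mem_singleton_iff]
        constructor
        · rintro ⟨i, hi, hr⟩
          have hii : i = i1 := by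
            by_contra hcon
            simp [he1, hcon] at hi
          subst hii
          simp [he0, he1, hne.symm] at hr ⊢
          exact hr
        · intro h
          refine ⟨i1, by simp [he1], ?_⟩
          simp [he0, he1, hne.symm, h]
      have hmxy : mxy e0 e1 = 0 := by
        unfold mxy
        rw [hset, csInf_singleton]
      have hD : Dd e0 e1 = 1 := by
        unfold Dd
        rw [hmxy]
        norm_num
      have : (1 : ℝ) ∈ {r : ℝ | ∃ x y : Fin d → ℝ, memX x ∧ memX y ∧ r = Dd x y} :=
        ⟨e0, e1, hm0, hm1, hD.symm⟩
      exact hb this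
  · -- ℓ¹ bound
    intro x y hx hy
    set α := mxy x y with hαdef
    set β := mxy y x with hβdef
    have hα0 := mxy_nonneg hx hy
    have hα1 := mxy_le_one hx hy
    have hβ0 := mxy_nonneg hy hx
    have hβ1 := mxy_le_one hy hx
    have hxy : ∀ i, α * y i ≤ x i := mxy_mul_le hx hy
    have hyx : ∀ i, β * x i ≤ y i := mxy_mul_le hy hx
    set S := Finset.univ.filter (fun i => y i < x i) with hS
    set A := ∑ i ∈ S, x i with hA
    set P := ∑ i ∈ S, (x i - y i) with hPdef
    have hmem : ∀ i ∈ S, y i < x i := fun i hi => (Finset.mem_filter.mp hi).2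
    have hsplit := Finset.sum_filter_add_sum_filter_not Finset.univ
      (fun i => y i < x i) (fun i => x i - y i)
    have hsumzero : ∑ i, (x i - y i) = 0 := by
      rw [Finset.sum_sub_distrib, hx.2, hy.2, sub_self]
    have hQ : ∑ i ∈ Finset.univ.filter (fun i => ¬ y i < x i), (y i - x i) = P := by
      have h1 : ∑ i ∈ Finset.univ.filter (fun i => ¬ y i < x i), (y i - x i)
          = - ∑ i ∈ Finset.univ.filter (fun i => ¬ y i < x i), (x i - y i) := by
        rw [← Finset.sum_neg_distrib]
        exact Finset.sum_congr rfl fun i _ => by ring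
      rw [h1]
      rw [hsumzero] at hsplit
      rw [hPdef, hS]
      linarith
    have habs : ∑ i, |x i - y i| = 2 * P := by
      rw [← Finset.sum_filter_add_sum_filter_not Finset.univ (fun i => y i < x i)
        (fun i => |x i - y i|)]
      have e1 : ∑ i ∈ Finset.univ.filter (fun i => y i < x i), |x i - y i| = P := by
        refine Finset.sum_congr rfl fun i hi => ?_
        exact abs_of_pos (sub_pos.mpr (hmem i hi))
      have e2 : ∑ i ∈ Finset.univ.filter (fun i => ¬ y i < x i), |x i - y i| = P := by
        rw [← hQ]
        refine Finset.sum_congr rfl fun i hi => ?_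
        have : x i ≤ y i := le_of_not_gt (Finset.mem_filter.mp hi).2
        rw [abs_of_nonpos (by linarith), neg_sub]
      rw [e1, e2]; ring
    have hP0 : 0 ≤ P := Finset.sum_nonneg fun i hi => by
      have := hmem i hi; linarith
    have hA0 : 0 ≤ A := Finset.sum_nonneg fun i _ => hx.1 i
    have hA1 : A ≤ 1 := by
      rw [hA, ← hx.2]
      exact Finset.sum_le_sum_of_subset_of_nonneg (Finset.filter_subset _ _)
        (fun i _ _ => hx.1 i)
    have hPA : P ≤ (1 - β) * A := by
      rw [hPdef, hA, Finset.mul_sum]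
      refine Finset.sum_le_sum fun i _ => ?_
      have := hyx i; nlinarith [hx.1 i]
    have hSy : β * A ≤ ∑ i ∈ S, y i := by
      rw [hA, Finset.mul_sum]
      exact Finset.sum_le_sum fun i _ => hyx i
    have hScy : ∑ i ∈ Finset.univ.filter (fun i => ¬ y i < x i), y i = 1 - ∑ i ∈ S, y i := by
      have := Finset.sum_filter_add_sum_filter_not Finset.univ (fun i => y i < x i) y
      rw [hy.2] at this
      rw [hS]; linarith
    have hP2 : P ≤ (1 - α) * (1 - β * A) := by
      have step1 : P ≤ (1 - α) * ∑ i ∈ Finset.univ.filter (fun i => ¬ y i < x i), y i := by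
        rw [← hQ, Finset.mul_sum]
        refine Finset.sum_le_sum fun i _ => ?_
        have := hxy i; nlinarith [hy.1 i]
      refine step1.trans ?_
      rw [hScy]
      apply mul_le_mul_of_nonneg_left _ (by linarith)
      linarith
    have hkey := keylem α β A P hα0 hα1 hβ0 hβ1 hA0 hA1 hP0 hPA hP2
    rw [habs]
    unfold Dd
    rw [← hαdef, ← hβdef]
    have hpos : (0:ℝ) < 1 + α * β := by nlinarith
    have := (le_div_iff₀ hpos).mpr hkey
    linarith
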